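/- arXiv:2508.02463 — 5 statements merged into one kernel-verified Lean document; each statement's English description precedes it below -/
import Mathlib

section
/- Action of P-CTC-assisted maps (Lemma 2 of the paper): let dS, dA ≥ 1 and let (K_j)_{j : Fin N} be a finite family of matrices K_j : Matrix (Fin dS × Fin dA) (Fin dS × Fin dA) ℂ. For ρ : Matrix (Fin dS) (Fin dS) ℂ define the matrix σ, indexed by Fin dS × (Fin dA × Fin dA), by σ = Σ_j L_j · R · L_jᴴ, where L_j ((s,(a,a')),(s',(b,b'))) = K_j ((s,a),(s',b)) if a' = b' and 0 otherwise, and R ((s,(a,a')),(s',(b,b'))) = ρ s s' · Φ⁺ (a,a') · conj(Φ⁺ (b,b')). Define the P-CTC-assisted map by C_CTC(ρ) s s' = Σ_{a,a',b,b' : Fin dA} conj(Φ⁺ (a,a')) · σ ((s,(a,a')),(s',(b,b'))) · Φ⁺ (b,b'). Then C_CTC(ρ) = (1/dA²) · Σ_j (Tr₂ K_j) · ρ · (Tr₂ K_j)ᴴ. -/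
open Matrix

lemma sum5_reorder {M : Type*} [AddCommMonoid M] {i1 i2 i3 i4 i5 : Type*}
    [Fintype i1] [Fintype i2] [Fintype i3] [Fintype i4] [Fintype i5]
    (f : i1 → i2 → i3 → i4 → i5 → M) :
    (∑ a : i1, ∑ b : i2, ∑ c : i3, ∑ d : i4, ∑ e : i5, f a b c d e) =
      ∑ c : i3, ∑ e : i5, ∑ d : i4, ∑ a : i1, ∑ b : i2, f a b c d e := by
  calc (∑ a : i1, ∑ b : i2, ∑ c : i3, ∑ d : i4, ∑ e : i5, f a b c d e)
      = ∑ a : i1, ∑ c : i3, ∑ b : i2, ∑ d : i4, ∑ e : i5, f a b c d e :=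
        Finset.sum_congr rfl fun a _ => Finset.sum_comm
    _ = ∑ c : i3, ∑ a : i1, ∑ b : i2, ∑ d : i4, ∑ e : i5, f a b c d e := Finset.sum_comm
    _ = ∑ c : i3, ∑ a : i1, ∑ d : i4, ∑ b : i2, ∑ e : i5, f a b c d e :=
        Finset.sum_congr rfl fun c _ => Finset.sum_congr rfl fun a _ => Finset.sum_comm
    _ = ∑ c : i3, ∑ d : i4, ∑ a : i1, ∑ b : i2, ∑ e : i5, f a b c d e :=
        Finset.sum_congr rfl fun c _ => Finset.sum_comm
    _ = ∑ c : i3, ∑ d : i4, ∑ a : i1, ∑ e : i5, ∑ b : i2, f a b c d e :=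
        Finset.sum_congr rfl fun c _ => Finset.sum_congr rfl fun d _ =>
          Finset.sum_congr rfl fun a _ => Finset.sum_comm
    _ = ∑ c : i3, ∑ d : i4, ∑ e : i5, ∑ a : i1, ∑ b : i2, f a b c d e :=
        Finset.sum_congr rfl fun c _ => Finset.sum_congr rfl fun d _ => Finset.sum_comm
    _ = ∑ c : i3, ∑ e : i5, ∑ d : i4, ∑ a : i1, ∑ b : i2, f a b c d e :=
        Finset.sum_congr rfl fun c _ => Finset.sum_comm

/-- The maximally entangled vector `Φ⁺ : Fin d × Fin d → ℂ`. -/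
noncomputable def phiPlus (d : ℕ) : Fin d × Fin d → ℂ :=
  fun p => if p.1 = p.2 then ((1 / Real.sqrt d : ℝ) : ℂ) else 0

/-- Partial trace over the second tensor factor. -/
noncomputable def trace2 {α β : Type*} [Fintype β] (M : Matrix (α × β) (α × β) ℂ) : Matrix α α ℂ :=
  Matrix.of fun i j => ∑ b : β, M (i, b) (j, b)

/-- Action of P-CTC-assisted maps: the P-CTC-assisted map obtained from a CP map with
Kraus operators `K j` equals `(1/dA²) Σ_j (Tr₂ K_j) ρ (Tr₂ K_j)ᴴ`. -/
theorem pctc_map_action (dS dA N : ℕ) (hS : 1 ≤ dS) (hA : 1 ≤ dA)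
    (K : Fin N → Matrix (Fin dS × Fin dA) (Fin dS × Fin dA) ℂ)
    (ρ : Matrix (Fin dS) (Fin dS) ℂ)
    (L : Fin N → Matrix (Fin dS × (Fin dA × Fin dA)) (Fin dS × (Fin dA × Fin dA)) ℂ)
    (hL : ∀ j s a a' s' b b', L j (s, (a, a')) (s', (b, b')) =
      if a' = b' then K j (s, a) (s', b) else 0)
    (R : Matrix (Fin dS × (Fin dA × Fin dA)) (Fin dS × (Fin dA × Fin dA)) ℂ)
    (hR : ∀ s a a' s' b b', R (s, (a, a')) (s', (b, b')) =
      ρ s s' * phiPlus dA (a, a') * (starRingEnd ℂ) (phiPlus dA (b, b')))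
    (σ : Matrix (Fin dS × (Fin dA × Fin dA)) (Fin dS × (Fin dA × Fin dA)) ℂ)
    (hσ : σ = ∑ j : Fin N, L j * R * (L j)ᴴ)
    (CCTC : Matrix (Fin dS) (Fin dS) ℂ)
    (hC : ∀ s s', CCTC s s' = ∑ a : Fin dA, ∑ a' : Fin dA, ∑ b : Fin dA, ∑ b' : Fin dA,
      (starRingEnd ℂ) (phiPlus dA (a, a')) * σ (s, (a, a')) (s', (b, b')) *
        phiPlus dA (b, b')) :
    CCTC = (1 / (dA : ℂ) ^ 2) • ∑ j : Fin N, trace2 (K j) * ρ * (trace2 (K j))ᴴ := by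
  have key : ∀ s a a' s' b b', σ (s, (a, a')) (s', (b, b')) =
      ∑ j : Fin N, ∑ t : Fin dS, ∑ u : Fin dS,
        K j (s, a) (t, a') * (ρ t u * ((1 / Real.sqrt dA : ℝ) : ℂ) *
          ((1 / Real.sqrt dA : ℝ) : ℂ)) * (starRingEnd ℂ) (K j (s', b) (u, b')) := by
    intro s a a' s' b b'
    simp only [hσ, Matrix.sum_apply, Matrix.mul_apply, Matrix.conjTranspose_apply,
      Fintype.sum_prod_type, hL, hR, phiPlus, apply_ite (starRingEnd ℂ),
      apply_ite (star : ℂ → ℂ), map_zero, star_zero, Complex.conj_ofReal, RCLike.star_def,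
      ite_mul, mul_ite, mul_zero, zero_mul,
      Finset.sum_ite_eq, Finset.sum_ite_eq', Finset.mem_univ, if_true]
    simp only [Finset.sum_ite_eq, Finset.sum_ite_eq', Finset.mem_univ, if_true, ite_mul,
      zero_mul, Finset.sum_ite_irrel, Finset.sum_const_zero]
    simp only [Finset.sum_mul]
    exact Finset.sum_congr rfl fun j _ => Finset.sum_comm
  ext s s'
  rw [hC]
  simp only [key, phiPlus, apply_ite (starRingEnd ℂ), map_zero, Complex.conj_ofReal,
    ite_mul, mul_ite, mul_zero, zero_mul,
    Finset.sum_ite_eq, Finset.sum_ite_eq', Finset.mem_univ, if_true, Finset.sum_ite_irrel,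
    Finset.sum_const_zero]
  simp only [mul_right_comm, Finset.mul_sum, Finset.sum_mul,
    Matrix.smul_apply, smul_eq_mul, Matrix.sum_apply, Matrix.mul_apply,
    Matrix.conjTranspose_apply, trace2, Matrix.of_apply, map_sum]
  rw [sum5_reorder]
  simp only [star_sum, Finset.mul_sum, RCLike.star_def]
  refine Finset.sum_congr rfl fun j _ => Finset.sum_congr rfl fun u _ =>
    Finset.sum_congr rfl fun t _ => Finset.sum_congr rfl fun x _ =>
    Finset.sum_congr rfl fun y _ => ?_
  have hc : ((1 / Real.sqrt dA : ℝ) : ℂ) * ((1 / Real.sqrt dA : ℝ) : ℂ) = 1 / (dA : ℂ) := by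
    rw [← Complex.ofReal_mul, div_mul_div_comm, one_mul,
      Real.mul_self_sqrt (Nat.cast_nonneg dA)]
    push_cast; ring
  linear_combination (K j (s, x) (t, x) * ρ t u * (starRingEnd ℂ) (K j (s', y) (u, y)) *
    (((1 / Real.sqrt dA : ℝ) : ℂ) * ((1 / Real.sqrt dA : ℝ) : ℂ) + 1 / (dA : ℂ))) * hc
end

section
/- Measurement probabilities for P-CTC-assisted maps (numerator identity): with the notation of the P-CTC setting — dS, dA ≥ 1, Kraus family (K_j)_{j : Fin N} on Fin dS × Fin dA, ρ : Matrix (Fin dS) (Fin dS) ℂ, σ = Σ_j L_j · R · L_jᴴ where L_j ((s,(a,a')),(s',(b,b'))) = K_j ((s,a),(s',b)) if a' = b' and 0 otherwise and R ((s,(a,a')),(s',(b,b'))) = ρ s s' · Φ⁺ (a,a') · conj(Φ⁺ (b,b')) — for every matrix M : Matrix (Fin dS) (Fin dS) ℂ one has trace(σ · T) = trace( ((1/dA²) · Σ_j (Tr₂ K_j) · ρ · (Tr₂ K_j)ᴴ) · M ), where T ((s,(a,a')),(s',(b,b'))) = M s s' · Φ⁺ (a,a') · conj(Φ⁺ (b,b')).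 That is, the Born-rule probability weight of a measurement effect M together with successful post-selection on Φ⁺ equals trace(C_CTC(ρ) · M). -/
set_option maxHeartbeats 1000000


open Matrix

private lemma pctc_sum_swap4 {α β γ δ : Type*} [Fintype α] [Fintype β] [Fintype γ] [Fintype δ]
    (g : α → β → γ → δ → ℂ) :
    ∑ a, ∑ b, ∑ c, ∑ d, g a b c d = ∑ c, ∑ b, ∑ d, ∑ a, g a b c d :=
  calc ∑ a, ∑ b, ∑ c, ∑ d, g a b c d
      = ∑ a, ∑ c, ∑ b, ∑ d, g a b c d :=
        Finset.sum_congr rfl fun _ _ => Finset.sum_comm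
    _ = ∑ c, ∑ a, ∑ b, ∑ d, g a b c d := Finset.sum_comm
    _ = ∑ c, ∑ b, ∑ a, ∑ d, g a b c d :=
        Finset.sum_congr rfl fun _ _ => Finset.sum_comm
    _ = ∑ c, ∑ b, ∑ d, ∑ a, g a b c d :=
        Finset.sum_congr rfl fun _ _ => Finset.sum_congr rfl fun _ _ => Finset.sum_comm

/-- Measurement probabilities for P-CTC-assisted maps (numerator identity):
the Born-rule probability weight of a measurement effect `M` together with
successful post-selection on `Φ⁺` equals `trace (C_CTC(ρ) * M)`. -/
theorem pctc_measurement_probability (dS dA N : ℕ) (hS : 1 ≤ dS) (hA : 1 ≤ dA)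
    (K : Fin N → Matrix (Fin dS × Fin dA) (Fin dS × Fin dA) ℂ)
    (ρ : Matrix (Fin dS) (Fin dS) ℂ)
    (L : Fin N → Matrix (Fin dS × (Fin dA × Fin dA)) (Fin dS × (Fin dA × Fin dA)) ℂ)
    (hL : ∀ j s a a' s' b b', L j (s, (a, a')) (s', (b, b')) =
      if a' = b' then K j (s, a) (s', b) else 0)
    (R : Matrix (Fin dS × (Fin dA × Fin dA)) (Fin dS × (Fin dA × Fin dA)) ℂ)
    (hR : ∀ s a a' s' b b', R (s, (a, a')) (s', (b, b')) =
      ρ s s' * phiPlus dA (a, a') * (starRingEnd ℂ) (phiPlus dA (b, b')))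
    (σ : Matrix (Fin dS × (Fin dA × Fin dA)) (Fin dS × (Fin dA × Fin dA)) ℂ)
    (hσ : σ = ∑ j : Fin N, L j * R * (L j)ᴴ)
    (M : Matrix (Fin dS) (Fin dS) ℂ)
    (T : Matrix (Fin dS × (Fin dA × Fin dA)) (Fin dS × (Fin dA × Fin dA)) ℂ)
    (hT : ∀ s a a' s' b b', T (s, (a, a')) (s', (b, b')) =
      M s s' * phiPlus dA (a, a') * (starRingEnd ℂ) (phiPlus dA (b, b'))) :
    Matrix.trace (σ * T) =
      Matrix.trace (((1 / (dA : ℂ) ^ 2) •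
        ∑ j : Fin N, trace2 (K j) * ρ * (trace2 (K j))ᴴ) * M) := by
  have hphi : ∀ a b : Fin dA, phiPlus dA (a, b) =
      if a = b then ((1 / Real.sqrt dA : ℝ) : ℂ) else 0 := fun _ _ => rfl
  set c : ℂ := ((1 / Real.sqrt dA : ℝ) : ℂ) with hc
  have hc2 : c * c = 1 / (dA : ℂ) := by
    rw [hc, ← Complex.ofReal_mul, div_mul_div_comm, one_mul,
      Real.mul_self_sqrt (by positivity)]
    push_cast
    ring
  have hfold : ∀ z w : ℂ, (c * c * z) * (w * c * c) = (1 / (dA : ℂ) ^ 2) * (z * w) :=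
    fun z w => by linear_combination (c * c * z * w + 1 / (dA : ℂ) * z * w) * hc2
  have hstarc : star c = c := by rw [← starRingEnd_apply]; exact Complex.conj_ofReal _
  have hconjc : (starRingEnd ℂ) c = c := Complex.conj_ofReal _
  subst hσ
  rw [Matrix.sum_mul, Matrix.trace_sum, Matrix.smul_mul, Matrix.trace_smul, Matrix.sum_mul,
    Matrix.trace_sum, Finset.smul_sum]
  refine Finset.sum_congr rfl (fun j _ => ?_)
  rw [smul_eq_mul]
  -- entries of `L j * R`
  have h1 : ∀ s a a' u e e', (L j * R) (s, (a, a')) (u, (e, e')) =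
      c * (∑ t, K j (s, a) (t, a') * ρ t u) * (starRingEnd ℂ) (phiPlus dA (e, e')) := by
    intro s a a' u e e'
    rw [Matrix.mul_apply]
    simp only [Fintype.sum_prod_type, hL, hR, hphi, mul_ite, ite_mul, mul_zero, zero_mul,
      Finset.sum_ite_eq, Finset.sum_ite_eq', Finset.mem_univ, if_true]
    rw [Finset.mul_sum, Finset.sum_mul]
    exact Finset.sum_congr rfl fun t _ => by ring
  -- entries of `L j * R * (L j)ᴴ`
  have h2 : ∀ s a a' v f f', (L j * R * (L j)ᴴ) (s, (a, a')) (v, (f, f')) =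
      c * c * ∑ u, (∑ t, K j (s, a) (t, a') * ρ t u) * (starRingEnd ℂ) (K j (v, f) (u, f')) := by
    intro s a a' v f f'
    rw [Matrix.mul_apply]
    simp only [Fintype.sum_prod_type, Matrix.conjTranspose_apply, h1, hL, hphi,
      apply_ite (starRingEnd ℂ), apply_ite (star : ℂ → ℂ), star_zero, map_zero,
      starRingEnd_apply, mul_ite, ite_mul, mul_zero, zero_mul,
      Finset.sum_ite_eq, Finset.sum_ite_eq', Finset.mem_univ, if_true]
    rw [Finset.mul_sum]
    refine Finset.sum_congr rfl fun u _ => ?_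
    simp only [hconjc, hstarc]
    ring
  -- expand the trace on the left-hand side
  have htr : Matrix.trace (L j * R * (L j)ᴴ * T) =
      ∑ x, ∑ w, (L j * R * (L j)ᴴ) x w * T w x := by
    simp only [Matrix.trace, Matrix.diag_apply, Matrix.mul_apply]
  rw [htr]
  simp only [Fintype.sum_prod_type, h2, hT, hphi,
    apply_ite (starRingEnd ℂ), map_zero, Complex.conj_ofReal, mul_ite, ite_mul, mul_zero, zero_mul,
    Finset.sum_ite_irrel, Finset.sum_ite_eq, Finset.sum_ite_eq', Finset.mem_univ, if_true,
    Finset.sum_const_zero]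
  -- expand the trace on the right-hand side
  simp only [Matrix.trace, Matrix.diag_apply, Matrix.mul_apply, trace2, Matrix.of_apply,
    Matrix.conjTranspose_apply, starRingEnd_apply]
  simp only [hstarc]
  rw [Finset.mul_sum]
  refine Finset.sum_congr rfl fun s _ => ?_
  rw [Finset.sum_comm, Finset.mul_sum]
  refine Finset.sum_congr rfl fun v _ => ?_
  simp only [hfold]
  have key : (∑ a, ∑ f, ∑ u, (∑ t, K j (s, a) (t, a) * ρ t u) * star (K j (v, f) (u, f)))
      = ∑ u, (∑ t, (∑ a, K j (s, a) (t, a)) * ρ t u) * star (∑ f, K j (v, f) (u, f)) := by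
    simp only [star_sum, Finset.sum_mul, Finset.mul_sum]
    exact pctc_sum_swap4 fun a f u t => K j (s, a) (t, a) * ρ t u * star (K j (v, f) (u, f))
  rw [← key]
  simp only [Finset.sum_mul, Finset.mul_sum]
end

section
/- The qubit-P-CTC gadget extracts a coefficient (Appendix C.1 of the paper): fix d ≥ 1, i : Fin d, and a real a with |a| ≤ 1; set b = √(1 − a²) and let V : Matrix (Fin 2) (Fin 2) ℂ be the rotation matrix with rows (a, −b) and (b, a). Let e_i = Pi.single i 1, P_i = Matrix.vecMulVec e_i (star e_i), and define the controlled unitary C_V = P_i ⊗ₖ V + (1 − P_i) ⊗ₖ 1 on Matrix (Fin d × Fin 2) (Fin d × Fin 2) ℂ. Then C_V is unitary, and for every matrix W : Matrix (Fin d) (Fin d) ℂ, the partial trace over the qubit factor satisfies Tr₂((W ⊗ₖ 1) * C_V) = 2 • (W * ((a : ℂ) • P_i + (1 − P_i))); in particular (Tr₂((W ⊗ₖ 1) * C_V)).mulVec e_i = (2a : ℂ) • (W.mulVec e_i). -/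
open Matrix

open scoped Kronecker

private lemma trace2_add {α β : Type*} [Fintype β] (M N : Matrix (α × β) (α × β) ℂ) :
    trace2 (M + N) = trace2 M + trace2 N := by
  ext i j; simp [trace2, Finset.sum_add_distrib]

private lemma trace2_kron {α β : Type*} [Fintype β] (A : Matrix α α ℂ) (B : Matrix β β ℂ) :
    trace2 (A ⊗ₖ B) = B.trace • A := by
  ext i j
  simp only [trace2, Matrix.of_apply, Matrix.smul_apply, Matrix.trace, Matrix.diag,
    kroneckerMap_apply, smul_eq_mul]
  rw [Finset.sum_mul]
  exact Finset.sum_congr rfl fun x _ => mul_comm _ _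

private lemma kron_conjTranspose {l m n p : Type*} (A : Matrix l m ℂ) (B : Matrix n p ℂ) :
    (A ⊗ₖ B)ᴴ = Aᴴ ⊗ₖ Bᴴ := by
  ext ⟨i, x⟩ ⟨j, y⟩
  simp [Matrix.conjTranspose_apply]

/-- The qubit-P-CTC gadget extracts a coefficient: the controlled rotation
`C_V = P_i ⊗ V + (1 - P_i) ⊗ 1` is unitary, and tracing out the qubit after
composing with `W ⊗ 1` yields `2 (W (a • P_i + (1 - P_i)))`; in particular the
basis vector `e_i` is mapped to `2a • W e_i`. -/
theorem qubit_pctc_gadget (d : ℕ) (hd : 1 ≤ d) (i : Fin d) (a : ℝ) (ha : |a| ≤ 1)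
    (b : ℝ) (hb : b = Real.sqrt (1 - a ^ 2))
    (V : Matrix (Fin 2) (Fin 2) ℂ)
    (hV : V = !![(a : ℂ), -(b : ℂ); (b : ℂ), (a : ℂ)])
    (e : Fin d → ℂ) (he : e = Pi.single i 1)
    (P : Matrix (Fin d) (Fin d) ℂ) (hP : P = Matrix.vecMulVec e (star e))
    (CV : Matrix (Fin d × Fin 2) (Fin d × Fin 2) ℂ)
    (hCV : CV = P ⊗ₖ V + (1 - P) ⊗ₖ (1 : Matrix (Fin 2) (Fin 2) ℂ)) :
    CVᴴ * CV = 1 ∧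
    (∀ W : Matrix (Fin d) (Fin d) ℂ,
      trace2 ((W ⊗ₖ (1 : Matrix (Fin 2) (Fin 2) ℂ)) * CV) =
        (2 : ℂ) • (W * ((a : ℂ) • P + (1 - P))) ∧
      (trace2 ((W ⊗ₖ (1 : Matrix (Fin 2) (Fin 2) ℂ)) * CV)).mulVec e =
        (2 * (a : ℂ)) • W.mulVec e) := by
  have hb2 : (b : ℂ) ^ 2 = 1 - (a : ℂ) ^ 2 := by
    have h1 : a ^ 2 ≤ 1 := by nlinarith [abs_nonneg a, sq_abs a]
    have : b ^ 2 = 1 - a ^ 2 := by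
      rw [hb, Real.sq_sqrt (by linarith)]
    exact_mod_cast congrArg (fun x : ℝ => (x : ℂ)) this
  -- P facts
  have hPH : Pᴴ = P := by
    subst hP
    ext x y
    simp [Matrix.conjTranspose_apply, Matrix.vecMulVec_apply, mul_comm]
  have hPP : P * P = P := by
    subst hP he
    ext x y
    simp [Matrix.mul_apply, Matrix.vecMulVec_apply, Pi.single_apply]
  have hVV : Vᴴ * V = 1 := by
    subst hV
    ext x y
    fin_cases x <;> fin_cases y <;>
      [ (simp [Matrix.mul_apply, Fin.sum_univ_two, Matrix.one_apply]; linear_combination hb2);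
        (simp [Matrix.mul_apply, Fin.sum_univ_two, Matrix.one_apply]; ring);
        (simp [Matrix.mul_apply, Fin.sum_univ_two, Matrix.one_apply]; ring);
        (simp [Matrix.mul_apply, Fin.sum_univ_two, Matrix.one_apply]; linear_combination hb2)]
  have htrV : V.trace = 2 * (a : ℂ) := by
    subst hV
    simp [Matrix.trace, Matrix.diag, Fin.sum_univ_two]
    ring
  have hPe : P.mulVec e = e := by
    subst hP he
    ext x
    simp [Matrix.mulVec, Matrix.vecMulVec_apply, dotProduct, Pi.single_apply]
  -- unitarity
  have hU : CVᴴ * CV = 1 := by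
    have h1 : P * (1 - P) = 0 := by rw [Matrix.mul_sub, Matrix.mul_one, hPP, sub_self]
    have h1' : (1 - P) * P = 0 := by rw [Matrix.sub_mul, Matrix.one_mul, hPP, sub_self]
    have h2 : (1 - P)ᴴ = 1 - P := by rw [conjTranspose_sub, conjTranspose_one, hPH]
    have h3 : (1 - P) * (1 - P) = 1 - P := by rw [Matrix.sub_mul, Matrix.one_mul, h1, sub_zero]
    rw [hCV]
    simp only [conjTranspose_add, kron_conjTranspose, hPH, conjTranspose_one, h2, add_mul,
      mul_add, ← Matrix.mul_kronecker_mul, hPP, hVV, h1, h1', h3, Matrix.zero_kronecker,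
      Matrix.one_mul, Matrix.mul_one, add_zero, zero_add]
    rw [← Matrix.add_kronecker, add_sub_cancel, Matrix.one_kronecker_one]
  refine ⟨hU, fun W => ?_⟩
  have key : trace2 ((W ⊗ₖ (1 : Matrix (Fin 2) (Fin 2) ℂ)) * CV) =
      (2 : ℂ) • (W * ((a : ℂ) • P + (1 - P))) := by
    rw [hCV, Matrix.mul_add, ← Matrix.mul_kronecker_mul, ← Matrix.mul_kronecker_mul,
      Matrix.one_mul, Matrix.mul_one, trace2_add, trace2_kron, trace2_kron, htrV,
      Matrix.trace_one]
    rw [Fintype.card_fin]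
    push_cast
    simp only [Matrix.mul_add, Matrix.mul_smul, smul_smul, smul_add]
  refine ⟨key, ?_⟩
  rw [key]
  rw [Matrix.smul_mulVec, ← Matrix.mulVec_mulVec]
  have : ((a : ℂ) • P + (1 - P)).mulVec e = (a : ℂ) • e := by
    rw [Matrix.add_mulVec, Matrix.sub_mulVec, Matrix.smul_mulVec, hPe, Matrix.one_mulVec]
    simp
  rw [this, Matrix.mulVec_smul, smul_smul]
end

section
/- Two-P-CTC realization of an arbitrary diagonal-coefficient operator (the circuit of Figs. 10–11 of the paper): let d ≥ 1, let a : Fin d → ℝ with 0 ≤ a i ≤ 1 for all i, and let ψ : Fin d → (Fin d → ℂ) be unit vectors. Then there exist a unitary matrix U : Matrix (Fin d × (Fin 2 × Fin d)) (Fin d × (Fin 2 × Fin d)) ℂ and a real c > 0 such that the partial trace of U over the second factor (the qubit and the d-dimensional ancilla jointly), namely the matrix M with M s s' = Σ_{q : Fin 2} Σ_{α : Fin d} U (s, (q, α)) (s', (q, α)), equals c • Σ_{i : Fin d} (a i : ℂ) • Matrix.vecMulVec (ψ i) (star (Pi.single i 1)). -/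
open Matrix
namespace TwoPctc
set_option linter.unusedSectionVars false
set_option maxHeartbeats 1000000




variable {I : Type*} [Fintype I] [DecidableEq I]

lemma vmv_mul_vmv (x y z w : I → ℂ) :
    vecMulVec x (star y) * vecMulVec z (star w)
      = (star y ⬝ᵥ z) • vecMulVec x (star w) := by
  ext i j
  simp only [Matrix.mul_apply, Matrix.vecMulVec_apply, Matrix.smul_apply,
    dotProduct, smul_eq_mul, Pi.star_apply]
  rw [Finset.sum_mul]
  exact Finset.sum_congr rfl fun k _ => by ring

lemma vmv_conjT (x y : I → ℂ) : (vecMulVec x (star y))ᴴ = vecMulVec y (star x) := by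
  ext i j
  simp [Matrix.vecMulVec_apply, Matrix.conjTranspose_apply, mul_comm]

lemma sum_vmv_mul {ι : Type*} [Fintype ι] [DecidableEq ι]
    (c c' : ι → ℂ) (x y z w : ι → I → ℂ)
    (h : ∀ i j, star (y i) ⬝ᵥ z j = if i = j then 1 else 0) :
    (∑ i, c i • vecMulVec (x i) (star (y i))) * (∑ j, c' j • vecMulVec (z j) (star (w j)))
      = ∑ i, (c i * c' i) • vecMulVec (x i) (star (w i)) := by
  rw [Finset.sum_mul_sum]
  refine Finset.sum_congr rfl fun i _ => ?_
  rw [Finset.sum_eq_single i]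
  · rw [smul_mul_assoc, mul_smul_comm, vmv_mul_vmv, h, if_pos rfl, one_smul, smul_smul]
  · intro j _ hj
    rw [smul_mul_assoc, mul_smul_comm, vmv_mul_vmv, h, if_neg fun e => hj e.symm,
      zero_smul, smul_zero, smul_zero]
  · intro hi; exact absurd (Finset.mem_univ i) hi

lemma conjT_sum_vmv_real {ι : Type*} [Fintype ι]
    (c : ι → ℝ) (x y : ι → I → ℂ) :
    (∑ i, ((c i : ℝ) : ℂ) • vecMulVec (x i) (star (y i)))ᴴ
      = ∑ i, ((c i : ℝ) : ℂ) • vecMulVec (y i) (star (x i)) := by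
  rw [Matrix.conjTranspose_sum]
  exact Finset.sum_congr rfl fun i _ => by
    rw [Matrix.conjTranspose_smul, vmv_conjT, Complex.star_def, Complex.conj_ofReal]

section blocks

variable {ι : Type*} [Fintype ι] [DecidableEq ι]
  (aa : ι → ℝ) (u v : ι → I → ℂ)

noncomputable def bco (aa : ι → ℝ) (i : ι) : ℂ := ((1 - Real.sqrt (1 - aa i ^ 2) : ℝ) : ℂ)

noncomputable def Kb : Matrix I I ℂ := ∑ i, ((aa i : ℝ) : ℂ) • vecMulVec (u i) (star (v i))

noncomputable def Mb : Matrix I I ℂ := 1 - ∑ i, bco aa i • vecMulVec (v i) (star (v i))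

noncomputable def Rb : Matrix I I ℂ := 1 - ∑ i, bco aa i • vecMulVec (u i) (star (u i))

lemma coeff_zero (ha : ∀ i, 0 ≤ aa i ∧ aa i ≤ 1) (i : ι) :
    ((aa i : ℝ) : ℂ) * ((aa i : ℝ) : ℂ) + bco aa i * bco aa i - bco aa i - bco aa i = 0 := by
  have h0 : (0:ℝ) ≤ 1 - aa i ^ 2 := by nlinarith [(ha i).1, (ha i).2]
  have h1 : Real.sqrt (1 - aa i ^ 2) ^ 2 = 1 - aa i ^ 2 := Real.sq_sqrt h0
  have h2 : aa i * aa i + (1 - Real.sqrt (1 - aa i ^ 2)) * (1 - Real.sqrt (1 - aa i ^ 2))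
      - (1 - Real.sqrt (1 - aa i ^ 2)) - (1 - Real.sqrt (1 - aa i ^ 2)) = 0 := by nlinarith [h1]
  unfold bco
  calc ((aa i : ℝ) : ℂ) * ((aa i : ℝ) : ℂ)
        + ((1 - Real.sqrt (1 - aa i ^ 2) : ℝ) : ℂ) * ((1 - Real.sqrt (1 - aa i ^ 2) : ℝ) : ℂ)
        - ((1 - Real.sqrt (1 - aa i ^ 2) : ℝ) : ℂ) - ((1 - Real.sqrt (1 - aa i ^ 2) : ℝ) : ℂ)
      = ((aa i * aa i + (1 - Real.sqrt (1 - aa i ^ 2)) * (1 - Real.sqrt (1 - aa i ^ 2))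
        - (1 - Real.sqrt (1 - aa i ^ 2)) - (1 - Real.sqrt (1 - aa i ^ 2)) : ℝ) : ℂ) := by
        push_cast; ring
    _ = 0 := by rw [h2, Complex.ofReal_zero]

lemma KbT : (Kb aa u v)ᴴ = ∑ i, ((aa i : ℝ) : ℂ) • vecMulVec (v i) (star (u i)) :=
  conjT_sum_vmv_real aa u v

lemma MbT : (Mb aa v)ᴴ = Mb aa v := by
  unfold Mb
  rw [Matrix.conjTranspose_sub, Matrix.conjTranspose_one]
  congr 1
  exact conjT_sum_vmv_real _ v v

lemma RbT : (Rb aa u)ᴴ = Rb aa u := by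
  unfold Rb
  rw [Matrix.conjTranspose_sub, Matrix.conjTranspose_one]
  congr 1
  exact conjT_sum_vmv_real _ u u

/-- core identity: for an orthonormal family `w`,
`∑ aᵢ²•|wᵢ⟩⟨wᵢ| + (1-∑(1-bᵢ)|wᵢ⟩⟨wᵢ|)² = 1`. -/
lemma core_sum (w : ι → I → ℂ) (ha : ∀ i, 0 ≤ aa i ∧ aa i ≤ 1)
    (hww : ∀ i j, star (w i) ⬝ᵥ w j = if i = j then 1 else 0) :
    (∑ i, (((aa i : ℝ) : ℂ) * ((aa i : ℝ) : ℂ)) • vecMulVec (w i) (star (w i)))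
      + (1 - ∑ i, bco aa i • vecMulVec (w i) (star (w i)))
        * (1 - ∑ i, bco aa i • vecMulVec (w i) (star (w i))) = 1 := by
  have hSS := sum_vmv_mul (bco aa) (bco aa) w w w w hww
  have expand : (1 - ∑ i, bco aa i • vecMulVec (w i) (star (w i))) *
      (1 - ∑ i, bco aa i • vecMulVec (w i) (star (w i)))
      = 1 - ∑ i, bco aa i • vecMulVec (w i) (star (w i))
          - ∑ i, bco aa i • vecMulVec (w i) (star (w i))
          + ∑ i, (bco aa i * bco aa i) • vecMulVec (w i) (star (w i)) := by
    rw [← hSS]; noncomm_ring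
  rw [expand]
  have key : (∑ i, (((aa i : ℝ) : ℂ) * ((aa i : ℝ) : ℂ)) • vecMulVec (w i) (star (w i)))
      + (∑ i, (bco aa i * bco aa i) • vecMulVec (w i) (star (w i)))
      - (∑ i, bco aa i • vecMulVec (w i) (star (w i)))
      - (∑ i, bco aa i • vecMulVec (w i) (star (w i))) = 0 := by
    rw [← Finset.sum_add_distrib, ← Finset.sum_sub_distrib, ← Finset.sum_sub_distrib]
    refine Finset.sum_eq_zero fun i _ => ?_
    rw [← add_smul, ← sub_smul, ← sub_smul, coeff_zero aa ha i, zero_smul]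
  have gen : ∀ X Y S O : Matrix I I ℂ, X + Y - S - S = 0 → X + (O - S - S + Y) = O := by
    intro X Y S O h
    have h2 : X + (O - S - S + Y) = O + (X + Y - S - S) := by abel
    rw [h2, h, add_zero]
  exact gen _ _ _ _ key

lemma block11 (ha : ∀ i, 0 ≤ aa i ∧ aa i ≤ 1)
    (huu : ∀ i j, star (u i) ⬝ᵥ u j = if i = j then 1 else 0)
    (hvv : ∀ i j, star (v i) ⬝ᵥ v j = if i = j then 1 else 0) :
    (Kb aa u v)ᴴ * Kb aa u v + (Mb aa v)ᴴ * Mb aa v = 1 := by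
  rw [MbT, KbT]
  unfold Kb Mb
  rw [sum_vmv_mul _ _ _ _ _ _ huu]
  exact core_sum aa v ha hvv

lemma block22 (ha : ∀ i, 0 ≤ aa i ∧ aa i ≤ 1)
    (huu : ∀ i j, star (u i) ⬝ᵥ u j = if i = j then 1 else 0)
    (hvv : ∀ i j, star (v i) ⬝ᵥ v j = if i = j then 1 else 0) :
    (Kb aa u v) * (Kb aa u v)ᴴ + (Rb aa u) * (Rb aa u) = 1 := by
  rw [KbT]
  unfold Kb Rb
  rw [sum_vmv_mul _ _ _ _ _ _ hvv]
  exact core_sum aa u ha huu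

lemma block12 (huu : ∀ i j, star (u i) ⬝ᵥ u j = if i = j then 1 else 0)
    (hvv : ∀ i j, star (v i) ⬝ᵥ v j = if i = j then 1 else 0) :
    (Kb aa u v)ᴴ * Rb aa u = Mb aa v * (Kb aa u v)ᴴ := by
  rw [KbT]
  unfold Rb Mb
  rw [mul_sub, sub_mul, mul_one, one_mul,
    sum_vmv_mul _ _ _ _ _ _ huu, sum_vmv_mul _ _ _ _ _ _ hvv]
  congr 1
  exact Finset.sum_congr rfl fun i _ => by rw [mul_comm]

end blocks



variable {d : ℕ}

/-- `ψ i ⊗ e i` -/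
def uvec (ψ : Fin d → Fin d → ℂ) (i : Fin d) : Fin d × Fin d → ℂ :=
  fun p => if p.2 = i then ψ i p.1 else 0

/-- `e i ⊗ e i` -/
def vvec (d : ℕ) (i : Fin d) : Fin d × Fin d → ℂ :=
  fun p => if p = (i, i) then 1 else 0

lemma uu_dot (ψ : Fin d → Fin d → ℂ) (hψ : ∀ i, ∑ k : Fin d, ‖ψ i k‖ ^ 2 = 1)
    (i j : Fin d) :
    star (uvec ψ i) ⬝ᵥ uvec ψ j = if i = j then 1 else 0 := by
  unfold uvec
  simp only [dotProduct, Pi.star_apply, Fintype.sum_prod_type]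
  by_cases hij : i = j
  · subst hij
    rw [if_pos rfl]
    have : ∀ s : Fin d, ∑ α : Fin d,
        star (if α = i then ψ i s else 0) * (if α = i then ψ i s else 0)
        = star (ψ i s) * ψ i s := by
      intro s
      rw [Finset.sum_eq_single i]
      · simp
      · intro b _ hb; simp [hb]
      · intro h; exact absurd (Finset.mem_univ i) h
    rw [Finset.sum_congr rfl fun s _ => this s]
    have h2 : ∀ s : Fin d, star (ψ i s) * ψ i s = ((‖ψ i s‖ ^ 2 : ℝ) : ℂ) := by
      intro s
      rw [Complex.star_def, mul_comm, Complex.mul_conj, Complex.sq_norm]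
    rw [Finset.sum_congr rfl fun s _ => h2 s, ← Complex.ofReal_sum, hψ i, Complex.ofReal_one]
  · rw [if_neg hij]
    refine Finset.sum_eq_zero fun s _ => Finset.sum_eq_zero fun α _ => ?_
    by_cases h1 : α = i
    · by_cases h2 : α = j
      · exact absurd (h1 ▸ h2) hij
      · simp [h1, hij]
    · simp [h1]

lemma vv_dot (i j : Fin d) :
    star (vvec d i) ⬝ᵥ vvec d j = if i = j then 1 else 0 := by
  unfold vvec
  simp only [dotProduct, Pi.star_apply]
  rw [Finset.sum_eq_single (i, i)]
  · by_cases hij : i = j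
    · subst hij; simp
    · have : (i, i) ≠ (j, j) := fun h => hij (congrArg Prod.fst h)
      simp [this, hij]
  · intro b _ hb; simp [hb]
  · intro h; exact absurd (Finset.mem_univ _) h




noncomputable def Pmat (d : ℕ) [NeZero d] : Matrix (Fin d × Fin d) (Fin d × Fin d) ℂ :=
  of fun p p' => if p = (p'.1, p'.2 + 1) then 1 else 0

lemma Pmat_unitary (d : ℕ) [NeZero d] : (Pmat d)ᴴ * Pmat d = 1 := by
  ext p p'
  simp only [Matrix.conjTranspose_apply, Matrix.mul_apply, Pmat, Matrix.of_apply,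
    apply_ite (star : ℂ → ℂ), star_one, star_zero]
  rw [Finset.sum_eq_single ((p.1, p.2 + 1) : Fin d × Fin d)]
  · rw [if_pos rfl, one_mul, Matrix.one_apply]
    by_cases h : p = p'
    · simp [h]
    · have hne : ((p.1, p.2 + 1) : Fin d × Fin d) ≠ (p'.1, p'.2 + 1) := by
        intro e
        apply h
        have h1 := congrArg Prod.fst e
        have h2 := congrArg Prod.snd e
        exact Prod.ext h1 (add_right_cancel h2)
      simp [h, hne]
  · intro b _ hb
    rw [if_neg hb, zero_mul]
  · intro h; exact absurd (Finset.mem_univ _) h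

def blockEquiv (d : ℕ) : (Fin d × Fin d) ⊕ (Fin d × Fin d) ≃ Fin d × (Fin 2 × Fin d) where
  toFun x := Sum.elim (fun p => (p.1, (0, p.2))) (fun p => (p.1, (1, p.2))) x
  invFun y := if y.2.1 = 0 then Sum.inl (y.1, y.2.2) else Sum.inr (y.1, y.2.2)
  left_inv := by rintro (⟨s, α⟩ | ⟨s, α⟩) <;> simp
  right_inv := by
    rintro ⟨s, q, α⟩
    fin_cases q <;> simp

lemma blockEquiv_symm_inl (d : ℕ) (s α : Fin d) :
    (blockEquiv d).symm (s, (0, α)) = Sum.inl (s, α) :=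
  (blockEquiv d).symm_apply_eq.mpr rfl

lemma blockEquiv_symm_inr (d : ℕ) (s α : Fin d) :
    (blockEquiv d).symm (s, (1, α)) = Sum.inr (s, α) :=
  (blockEquiv d).symm_apply_eq.mpr rfl

lemma fin_add_one_ne (d : ℕ) (hd2 : 2 ≤ d) [NeZero d] (α : Fin d) : α + 1 ≠ α := by
  intro h
  have h1 : (1 : Fin d) = 0 := by
    have := add_eq_left.mp h
    exact this
  rw [Fin.one_eq_zero_iff] at h1
  omega


end TwoPctc

namespace TwoPctc

lemma main_ge2 (d : ℕ) (hd2 : 2 ≤ d)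
    (a : Fin d → ℝ) (ha : ∀ i, 0 ≤ a i ∧ a i ≤ 1)
    (ψ : Fin d → (Fin d → ℂ))
    (hψ : ∀ i, ∑ k : Fin d, ‖ψ i k‖ ^ 2 = 1) :
    ∃ (U : Matrix (Fin d × (Fin 2 × Fin d)) (Fin d × (Fin 2 × Fin d)) ℂ) (c : ℝ),
      Uᴴ * U = 1 ∧ 0 < c ∧
      (Matrix.of fun s s' : Fin d =>
          ∑ q : Fin 2, ∑ α : Fin d, U (s, (q, α)) (s', (q, α))) =
        (c : ℂ) • ∑ i : Fin d, (a i : ℂ) •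
          Matrix.vecMulVec (ψ i) (star (Pi.single i 1 : Fin d → ℂ)) := by
  haveI : NeZero d := ⟨by omega⟩
  set u := uvec ψ with hu
  set v := vvec d with hv
  have huu := uu_dot ψ hψ
  have hvv := vv_dot (d := d)
  set K : Matrix (Fin d × Fin d) (Fin d × Fin d) ℂ := Kb a u v with hK
  set M : Matrix (Fin d × Fin d) (Fin d × Fin d) ℂ := Mb a v with hM
  set R : Matrix (Fin d × Fin d) (Fin d × Fin d) ℂ := Rb a u with hR
  set P : Matrix (Fin d × Fin d) (Fin d × Fin d) ℂ := Pmat d with hP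
  refine ⟨(fromBlocks K (R * P) M (-(Kᴴ * P))).submatrix
      ⇑(blockEquiv d).symm ⇑(blockEquiv d).symm, 1, ?_, one_pos, ?_⟩
  · -- unitarity
    rw [Matrix.conjTranspose_submatrix,
      Matrix.submatrix_mul_equiv (e₂ := (blockEquiv d).symm),
      Matrix.fromBlocks_conjTranspose, Matrix.fromBlocks_multiply]
    have h11 : Kᴴ * K + Mᴴ * M = 1 := block11 a u v ha huu hvv
    have h12 : Kᴴ * (R * P) + Mᴴ * -(Kᴴ * P) = 0 := by
      rw [MbT, mul_neg, ← mul_assoc, ← mul_assoc, block12 a u v huu hvv, add_neg_cancel]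
    have hRK : R * K = K * M := by
      have h := congrArg Matrix.conjTranspose (block12 a u v huu hvv)
      rw [Matrix.conjTranspose_mul, Matrix.conjTranspose_mul,
        Matrix.conjTranspose_conjTranspose, RbT, MbT] at h
      exact h
    have h21 : (R * P)ᴴ * K + (-(Kᴴ * P))ᴴ * M = 0 := by
      rw [Matrix.conjTranspose_mul, Matrix.conjTranspose_neg, Matrix.conjTranspose_mul,
        Matrix.conjTranspose_conjTranspose, RbT]
      rw [neg_mul, mul_assoc, mul_assoc, ← mul_neg, ← mul_add, hRK, add_neg_cancel, mul_zero]
    have h22 : (R * P)ᴴ * (R * P) + (-(Kᴴ * P))ᴴ * -(Kᴴ * P) = 1 := by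
      rw [Matrix.conjTranspose_mul, Matrix.conjTranspose_neg, Matrix.conjTranspose_mul,
        Matrix.conjTranspose_conjTranspose, RbT]
      have e1 : Pᴴ * R * (R * P) + -(Pᴴ * K) * -(Kᴴ * P)
          = Pᴴ * ((K * Kᴴ + R * R) * P) := by noncomm_ring
      rw [e1, block22 a u v ha huu hvv, one_mul, Pmat_unitary]
    rw [h11, h12, h21, h22, Matrix.fromBlocks_one, Matrix.submatrix_one_equiv]
  · -- partial trace
    ext s s'
    rw [Matrix.of_apply, Fin.sum_univ_two]
    have e0 : ∀ α : Fin d,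
        (fromBlocks K (R * P) M (-(Kᴴ * P))).submatrix
          ⇑(blockEquiv d).symm ⇑(blockEquiv d).symm (s, ((0 : Fin 2), α)) (s', ((0 : Fin 2), α))
        = K (s, α) (s', α) := by
      intro α
      rw [Matrix.submatrix_apply, blockEquiv_symm_inl, blockEquiv_symm_inl,
        Matrix.fromBlocks_apply₁₁]
    have e1 : ∀ α : Fin d,
        (fromBlocks K (R * P) M (-(Kᴴ * P))).submatrix
          ⇑(blockEquiv d).symm ⇑(blockEquiv d).symm (s, ((1 : Fin 2), α)) (s', ((1 : Fin 2), α))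
        = (-(Kᴴ * P)) (s, α) (s', α) := by
      intro α
      rw [Matrix.submatrix_apply, blockEquiv_symm_inr, blockEquiv_symm_inr,
        Matrix.fromBlocks_apply₂₂]
    rw [Finset.sum_congr rfl fun α _ => e0 α, Finset.sum_congr rfl fun α _ => e1 α]
    have hN : ∀ α : Fin d, (-(Kᴴ * P)) (s, α) (s', α) = 0 := by
      intro α
      have hKP : (Kᴴ * P) (s, α) (s', α) = 0 := by
        rw [Matrix.mul_apply]
        rw [Finset.sum_eq_single ((s', α + 1) : Fin d × Fin d)]
        · have hPone : P (s', α + 1) (s', α) = 1 := by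
            rw [hP]; unfold Pmat; rw [Matrix.of_apply, if_pos rfl]
          rw [hPone, mul_one, Matrix.conjTranspose_apply]
          have hK0 : K (s', α + 1) (s, α) = 0 := by
            rw [hK]; unfold Kb
            rw [Matrix.sum_apply]
            refine Finset.sum_eq_zero fun i _ => ?_
            rw [Matrix.smul_apply, Matrix.vecMulVec_apply]
            by_cases h1 : ((s, α) : Fin d × Fin d) = (i, i)
            · have hαi : α = i := congrArg Prod.snd h1
              have hne : α + 1 ≠ i := by
                rw [← hαi]; exact fin_add_one_ne d hd2 α
              rw [hu]; unfold uvec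
              simp [hne]
            · rw [hv]; unfold vvec
              simp [h1]
          rw [hK0, star_zero]
        · intro b _ hb
          have : P b (s', α) = 0 := by
            rw [hP]; unfold Pmat; rw [Matrix.of_apply, if_neg hb]
          rw [this, mul_zero]
        · intro h; exact absurd (Finset.mem_univ _) h
      rw [Matrix.neg_apply, hKP, neg_zero]
    rw [Finset.sum_congr rfl fun α _ => hN α, Finset.sum_const_zero, add_zero]
    -- now the K part
    have hKsum : ∑ α : Fin d, K (s, α) (s', α)
        = ∑ i : Fin d, (a i : ℂ) * (ψ i s * star ((Pi.single i 1 : Fin d → ℂ) s')) := by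
      rw [hK]; unfold Kb
      simp only [Matrix.sum_apply, Matrix.smul_apply, Matrix.vecMulVec_apply, smul_eq_mul]
      rw [Finset.sum_comm]
      refine Finset.sum_congr rfl fun i _ => ?_
      rw [Finset.sum_eq_single i]
      · rw [hu, hv]; unfold uvec vvec
        by_cases h : s' = i
        · simp [h, Pi.single_apply]
        · have hne : ((s', i) : Fin d × Fin d) ≠ (i, i) := fun e => h (congrArg Prod.fst e)
          simp [h, hne, Pi.single_apply]
      · intro b _ hb
        rw [hu]; unfold uvec
        simp [hb]
      · intro h; exact absurd (Finset.mem_univ _) h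
    rw [hKsum, Complex.ofReal_one, one_smul]
    simp only [Matrix.sum_apply, Matrix.smul_apply, Matrix.vecMulVec_apply, smul_eq_mul,
      Pi.star_apply]


lemma main_one (a : Fin 1 → ℝ) (ha : ∀ i, 0 ≤ a i ∧ a i ≤ 1)
    (ψ : Fin 1 → (Fin 1 → ℂ))
    (hψ : ∀ i, ∑ k : Fin 1, ‖ψ i k‖ ^ 2 = 1) :
    ∃ (U : Matrix (Fin 1 × (Fin 2 × Fin 1)) (Fin 1 × (Fin 2 × Fin 1)) ℂ) (c : ℝ),
      Uᴴ * U = 1 ∧ 0 < c ∧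
      (Matrix.of fun s s' : Fin 1 =>
          ∑ q : Fin 2, ∑ α : Fin 1, U (s, (q, α)) (s', (q, α))) =
        (c : ℂ) • ∑ i : Fin 1, (a i : ℂ) •
          Matrix.vecMulVec (ψ i) (star (Pi.single i 1 : Fin 1 → ℂ)) := by
  have h0 : (0:ℝ) ≤ 1 - (a 0 / 2) ^ 2 := by nlinarith [(ha 0).1, (ha 0).2]
  set w : ℂ := Complex.ofReal (a 0 / 2)
      + Complex.ofReal (Real.sqrt (1 - (a 0 / 2) ^ 2)) * Complex.I with hw
  have hwconj : (starRingEnd ℂ) w * w = 1 := by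
    rw [mul_comm, Complex.mul_conj, hw, Complex.normSq_add_mul_I, Real.sq_sqrt h0]
    norm_num
  have hwsum : w + (starRingEnd ℂ) w = ((a 0 : ℝ) : ℂ) := by
    rw [Complex.add_conj, hw]
    simp
    push_cast
    ring
  have hψ0 : (starRingEnd ℂ) (ψ 0 0) * ψ 0 0 = 1 := by
    have h := hψ 0
    rw [Fin.sum_univ_one] at h
    rw [mul_comm, Complex.mul_conj, ← Complex.sq_norm, h, Complex.ofReal_one]
  set U : Matrix (Fin 1 × (Fin 2 × Fin 1)) (Fin 1 × (Fin 2 × Fin 1)) ℂ :=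
    Matrix.of (fun p p' => if p.2.1 = p'.2.1 then
      ψ 0 0 * (if p'.2.1 = 0 then w else (starRingEnd ℂ) w) else 0) with hU
  have hdiag0 : (starRingEnd ℂ) (ψ 0 0) * (starRingEnd ℂ) w * (ψ 0 0 * w) = 1 := by
    calc (starRingEnd ℂ) (ψ 0 0) * (starRingEnd ℂ) w * (ψ 0 0 * w)
        = ((starRingEnd ℂ) (ψ 0 0) * ψ 0 0) * ((starRingEnd ℂ) w * w) := by ring
      _ = 1 := by rw [hψ0, hwconj, mul_one]
  have hdiag1 : (starRingEnd ℂ) (ψ 0 0) * w * (ψ 0 0 * (starRingEnd ℂ) w) = 1 := by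
    calc (starRingEnd ℂ) (ψ 0 0) * w * (ψ 0 0 * (starRingEnd ℂ) w)
        = ((starRingEnd ℂ) (ψ 0 0) * ψ 0 0) * ((starRingEnd ℂ) w * w) := by ring
      _ = 1 := by rw [hψ0, hwconj, mul_one]
  refine ⟨U, 1, ?_, one_pos, ?_⟩
  · ext ⟨s, q, α⟩ ⟨s', q', α'⟩
    fin_cases s <;> fin_cases s' <;> fin_cases α <;> fin_cases α' <;>
      fin_cases q <;> fin_cases q' <;>
      simp [Matrix.mul_apply, Matrix.conjTranspose_apply, Fintype.sum_prod_type,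
        Fin.sum_univ_two, Fin.sum_univ_one, Matrix.one_apply, hU] <;> assumption
  · ext s s'
    fin_cases s <;> fin_cases s' <;>
      simp [Matrix.of_apply, Fin.sum_univ_two, Fin.sum_univ_one, hU, Complex.star_def,
        Matrix.sum_apply, Matrix.smul_apply, Matrix.vecMulVec_apply, Pi.single_apply]
    linear_combination (ψ 0 0) * hwsum

end TwoPctc

/-- Two-P-CTC realization of an arbitrary diagonal-coefficient operator: for any
coefficients `0 ≤ a_i ≤ 1` and unit vectors `ψ_i` there is a unitary `U` on
`S ⊗ (Q ⊗ A)` whose partial trace over the qubit `Q` and the ancilla `A` jointly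
is proportional (with constant `c > 0`) to `Σ_i a_i • |ψ_i⟩⟨i|`. -/
theorem two_pctc_realization (d : ℕ) (hd : 1 ≤ d)
    (a : Fin d → ℝ) (ha : ∀ i, 0 ≤ a i ∧ a i ≤ 1)
    (ψ : Fin d → (Fin d → ℂ))
    (hψ : ∀ i, ∑ k : Fin d, ‖ψ i k‖ ^ 2 = 1) :
    ∃ (U : Matrix (Fin d × (Fin 2 × Fin d)) (Fin d × (Fin 2 × Fin d)) ℂ) (c : ℝ),
      Uᴴ * U = 1 ∧ 0 < c ∧
      (Matrix.of fun s s' : Fin d =>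
          ∑ q : Fin 2, ∑ α : Fin d, U (s, (q, α)) (s', (q, α))) =
        (c : ℂ) • ∑ i : Fin d, (a i : ℂ) •
          Matrix.vecMulVec (ψ i) (star (Pi.single i 1 : Fin d → ℂ)) := by
  rcases eq_or_lt_of_le hd with h1 | h2
  · subst h1
    exact TwoPctc.main_one a ha ψ hψ
  · exact TwoPctc.main_ge2 d h2 a ha ψ hψ
end

section
/- Verification of the single-P-CTC circuit (Fig. 11 of the paper): let d ≥ 1, let φ : Fin d → (Fin d → ℂ) be an orthonormal basis of ℂ^d, and let W : Fin d → Matrix (Fin d) (Fin d) ℂ be a family of unitary matrices. Define U = (Σ_{i : Fin d} (W i) ⊗ₖ Matrix.vecMulVec (φ i) (star (φ i))) * SWAP, where SWAP (i, a) (j, b) = 1 if i = b and a = j and 0 otherwise. Then U is unitary and the partial trace over the second factor satisfies Tr₂ U = Σ_{i : Fin d} Matrix.vecMulVec ((W i).mulVec (φ i)) (star (φ i)). -/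
open Matrix
open scoped Kronecker

private lemma sum4 {d : ℕ} {M : Type*} [AddCommMonoid M]
    (f : Fin d → Fin d → Fin d → Fin d → M) :
    ∑ k, ∑ c, ∑ p, ∑ q, f k c p q = ∑ p, ∑ q, ∑ c, ∑ k, f k c p q :=
  calc ∑ k, ∑ c, ∑ p, ∑ q, f k c p q
      = ∑ k, ∑ p, ∑ c, ∑ q, f k c p q :=
        Finset.sum_congr rfl fun k _ => Finset.sum_comm
    _ = ∑ p, ∑ k, ∑ c, ∑ q, f k c p q := Finset.sum_comm
    _ = ∑ p, ∑ k, ∑ q, ∑ c, f k c p q :=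
        Finset.sum_congr rfl fun p _ => Finset.sum_congr rfl fun k _ => Finset.sum_comm
    _ = ∑ p, ∑ q, ∑ k, ∑ c, f k c p q :=
        Finset.sum_congr rfl fun p _ => Finset.sum_comm
    _ = ∑ p, ∑ q, ∑ c, ∑ k, f k c p q :=
        Finset.sum_congr rfl fun p _ => Finset.sum_congr rfl fun q _ => Finset.sum_comm

/-- Verification of the single-P-CTC circuit:
`U = (Σ_i W_i ⊗ |φ_i⟩⟨φ_i|) * SWAP` is unitary and its partial trace over the
second factor equals `Σ_i |W_i φ_i⟩⟨φ_i|`. -/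
theorem single_pctc_circuit (d : ℕ) (hd : 1 ≤ d)
    (φ : Fin d → (Fin d → ℂ))
    (hφ : ∀ i j, ∑ k : Fin d, (starRingEnd ℂ) (φ i k) * φ j k =
      if i = j then 1 else 0)
    (W : Fin d → Matrix (Fin d) (Fin d) ℂ)
    (hW : ∀ i, (W i)ᴴ * W i = 1)
    (SWAP : Matrix (Fin d × Fin d) (Fin d × Fin d) ℂ)
    (hSWAP : ∀ i a j b : Fin d,
      SWAP (i, a) (j, b) = if i = b ∧ a = j then 1 else 0)
    (U : Matrix (Fin d × Fin d) (Fin d × Fin d) ℂ)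
    (hU : U = (∑ i : Fin d, (W i) ⊗ₖ Matrix.vecMulVec (φ i) (star (φ i))) * SWAP) :
    Uᴴ * U = 1 ∧
    trace2 U = ∑ i : Fin d,
      Matrix.vecMulVec ((W i).mulVec (φ i)) (star (φ i)) := by
  have hUe : ∀ i a j b, U (i,a) (j,b) =
      ∑ p, W p i b * (φ p a * (starRingEnd ℂ) (φ p j)) := by
    intro i a j b
    subst hU
    simp only [mul_apply, Matrix.sum_apply, kroneckerMap_apply, vecMulVec_apply, hSWAP,
      Fintype.sum_prod_type, mul_ite, mul_one, mul_zero, ite_and]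
    simp [Finset.sum_ite_eq, Pi.star_apply, RCLike.star_def]
  have comp : ∀ i j, ∑ p, φ p i * (starRingEnd ℂ) (φ p j) = if i = j then 1 else 0 := by
    set M : Matrix (Fin d) (Fin d) ℂ := Matrix.of fun i k => φ i k with hM
    have h1 : M * Mᴴ = 1 := by
      ext i j
      simp only [mul_apply, conjTranspose_apply, one_apply, hM, Matrix.of_apply,
        RCLike.star_def]
      have h := congrArg (starRingEnd ℂ) (hφ i j)
      rw [map_sum] at h
      simpa [apply_ite (starRingEnd ℂ)] using h
    have h2 : Mᴴ * M = 1 := mul_eq_one_comm.mp h1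
    intro i j
    have h := congrFun (congrFun h2 i) j
    simp only [mul_apply, conjTranspose_apply, one_apply, hM, Matrix.of_apply,
      RCLike.star_def] at h
    have h' := congrArg (starRingEnd ℂ) h
    rw [map_sum] at h'
    simpa [apply_ite (starRingEnd ℂ)] using h'
  have hWe : ∀ p a b, ∑ k, (starRingEnd ℂ) (W p k a) * W p k b = if a = b then 1 else 0 := by
    intro p a b
    have := congrFun (congrFun (hW p) a) b
    simpa [mul_apply, conjTranspose_apply, one_apply] using this
  constructor
  · ext ⟨i, a⟩ ⟨j, b⟩
    rw [mul_apply, one_apply]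
    calc ∑ x : Fin d × Fin d, Uᴴ (i,a) x * U x (j,b)
        = ∑ k, ∑ c, (∑ p, (starRingEnd ℂ) (W p k a * (φ p c * (starRingEnd ℂ) (φ p i))))
            * (∑ q, W q k b * (φ q c * (starRingEnd ℂ) (φ q j))) := by
          simp [conjTranspose_apply, hUe, map_sum, Fintype.sum_prod_type]
      _ = ∑ k, ∑ c, ∑ p, ∑ q,
            ((starRingEnd ℂ) (φ p c) * φ q c) *
            (((starRingEnd ℂ) (W p k a) * W q k b) *
              (φ p i * (starRingEnd ℂ) (φ q j))) := by
          refine Finset.sum_congr rfl fun k _ => Finset.sum_congr rfl fun c _ => ?_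
          rw [Finset.sum_mul_sum]
          refine Finset.sum_congr rfl fun p _ => Finset.sum_congr rfl fun q _ => ?_
          simp only [_root_.map_mul, Complex.conj_conj]
          ring
      _ = ∑ p, ∑ q, ∑ c, ∑ k,
            ((starRingEnd ℂ) (φ p c) * φ q c) *
            (((starRingEnd ℂ) (W p k a) * W q k b) *
              (φ p i * (starRingEnd ℂ) (φ q j))) := sum4 _
      _ = ∑ p, ∑ q, (∑ c, (starRingEnd ℂ) (φ p c) * φ q c) *
            ((∑ k, (starRingEnd ℂ) (W p k a) * W q k b) *
              (φ p i * (starRingEnd ℂ) (φ q j))) := by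
          refine Finset.sum_congr rfl fun p _ => Finset.sum_congr rfl fun q _ => ?_
          simp only [Finset.sum_mul, Finset.mul_sum]
          exact Finset.sum_comm
      _ = if (i,a) = (j,b) then 1 else 0 := by
          simp_rw [hφ]
          simp only [ite_mul, one_mul, zero_mul, Finset.sum_ite_eq, Finset.mem_univ, if_true]
          simp_rw [hWe]
          simp only [ite_mul, one_mul, zero_mul]
          by_cases hab : a = b
          · subst hab
            simp [comp, Prod.ext_iff]
          · simp [hab, Prod.ext_iff]
  · ext i j
    simp only [trace2, Matrix.of_apply, hUe, Matrix.sum_apply, vecMulVec_apply, mulVec, dotProduct,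
      Pi.star_apply, RCLike.star_def, Finset.sum_mul]
    rw [Finset.sum_comm]
    exact Finset.sum_congr rfl fun p _ => Finset.sum_congr rfl fun b _ => by ring
end
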